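/- Let f and f̃ be two solutions of the kinetic equation with characteristics Z_t[f] and Z_t[f̃], where F satisfies |F[f_t](z) − F[f̃_t](z)| ≤ c₁ W₂(f_t, f̃_t) and F[f̃_t] is c₀-Lipschitz. Then for each z, |Z_t[f](z) − Z_t[f̃](z)|² ≤ c₁² e^{2c₂ t} ∫₀ᵗ W₂²(f_s, f̃_s) ds, where c₂ = 1 + c₀². -/

import Mathlib

open MeasureTheory Metric Real
set_option maxHeartbeats 4000000

/-- The 2-Wasserstein distance, defined via couplings. -/
noncomputable def W2 {α : Type*} [MeasurableSpace α] [PseudoMetricSpace α]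
    (μ ν : Measure α) : ℝ :=
  sInf {c : ℝ | ∃ γ : Measure (α × α), IsProbabilityMeasure γ ∧
    γ.map Prod.fst = μ ∧ γ.map Prod.snd = ν ∧
    c = (∫ p, dist p.1 p.2 ^ 2 ∂γ) ^ ((1 : ℝ) / 2)}

theorem W2_nonneg {α : Type*} [MeasurableSpace α] [PseudoMetricSpace α]
    (μ ν : Measure α) : 0 ≤ W2 μ ν := by
  apply Real.sInf_nonneg
  rintro c ⟨γ, _, _, _, rfl⟩
  exact Real.rpow_nonneg (integral_nonneg fun p => by positivity) _

theorem aux_CS (c₂ t L : ℝ) (w : ℝ → ℝ) (ht : 0 ≤ t)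
    (hE2int : IntervalIntegrable (fun s => Real.exp (-(c₂*s))^2) volume 0 t)
    (hIint : IntervalIntegrable (fun s => w s^2) volume 0 t)
    (hwint : IntervalIntegrable (fun s => Real.exp (-(c₂*s)) * w s) volume 0 t) :
    2*L*(∫ s in (0:ℝ)..t, Real.exp (-(c₂*s)) * w s)
      ≤ L^2 * (∫ s in (0:ℝ)..t, Real.exp (-(c₂*s))^2) + ∫ s in (0:ℝ)..t, w s^2 := by
  have hsum : IntervalIntegrable
      (fun s => L^2 * Real.exp (-(c₂*s))^2 + w s^2) volume 0 t :=
    (hE2int.const_mul (L^2)).add hIint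
  have h2 : ∫ s in (0:ℝ)..t, (L^2 * Real.exp (-(c₂*s))^2 + w s^2)
      = L^2 * (∫ s in (0:ℝ)..t, Real.exp (-(c₂*s))^2) + ∫ s in (0:ℝ)..t, w s^2 := by
    rw [intervalIntegral.integral_add (hE2int.const_mul (L^2)) hIint,
      intervalIntegral.integral_const_mul]
  calc 2*L*(∫ s in (0:ℝ)..t, Real.exp (-(c₂*s)) * w s)
        = ∫ s in (0:ℝ)..t, 2*L*(Real.exp (-(c₂*s)) * w s) :=
        (intervalIntegral.integral_const_mul _ _).symm
    _ ≤ ∫ s in (0:ℝ)..t, (L^2 * Real.exp (-(c₂*s))^2 + w s^2) := by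
        apply intervalIntegral.integral_mono_on ht (hwint.const_mul _) hsum
        intro s _
        nlinarith [sq_nonneg (L * Real.exp (-(c₂*s)) - w s)]
    _ = L^2 * (∫ s in (0:ℝ)..t, Real.exp (-(c₂*s))^2) + ∫ s in (0:ℝ)..t, w s^2 := h2

/-- estimate between characteristics of two flows, with force
fields differing by `c₁ W₂(f_t, f̃_t)` pointwise, the second one being
`c₀`-Lipschitz: `|Z_t[f](z) − Z_t[f̃](z)|² ≤ c₁² e^{2c₂t} ∫₀ᵗ W₂²(f_s,f̃_s) ds`,
with `c₂ = 1 + c₀²`. -/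
theorem stmt_10 {d : ℕ} (T c₀ c₁ : ℝ) (hT : 0 ≤ T) (hc₀ : 0 ≤ c₀) (hc₁ : 0 ≤ c₁)
    (f g : ℝ → Measure (EuclideanSpace ℝ (Fin d) × EuclideanSpace ℝ (Fin d)))
    (F G : ℝ → EuclideanSpace ℝ (Fin d) → EuclideanSpace ℝ (Fin d) →
      EuclideanSpace ℝ (Fin d))
    (hFG : ∀ t ∈ Set.Icc 0 T, ∀ x v,
      ‖F t x v - G t x v‖ ≤ c₁ * W2 (f t) (g t))
    (hG : ∀ t ∈ Set.Icc 0 T, ∀ x v x' v',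
      ‖G t x v - G t x' v'‖ ≤ c₀ * Real.sqrt (‖x - x'‖ ^ 2 + ‖v - v'‖ ^ 2))
    (hW2cont : ContinuousOn (fun t => W2 (f t) (g t)) (Set.Icc 0 T))
    (X V Y W : EuclideanSpace ℝ (Fin d) × EuclideanSpace ℝ (Fin d) → ℝ →
      EuclideanSpace ℝ (Fin d))
    (hinit : ∀ z, X z 0 = z.1 ∧ V z 0 = z.2 ∧ Y z 0 = z.1 ∧ W z 0 = z.2)
    (hX : ∀ z, ∀ t ∈ Set.Icc 0 T, HasDerivAt (X z) (V z t) t)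
    (hV : ∀ z, ∀ t ∈ Set.Icc 0 T, HasDerivAt (V z) (F t (X z t) (V z t)) t)
    (hY : ∀ z, ∀ t ∈ Set.Icc 0 T, HasDerivAt (Y z) (W z t) t)
    (hW : ∀ z, ∀ t ∈ Set.Icc 0 T, HasDerivAt (W z) (G t (Y z t) (W z t)) t) :
    ∀ z, ∀ t ∈ Set.Icc 0 T,
      ‖X z t - Y z t‖ ^ 2 + ‖V z t - W z t‖ ^ 2 ≤
        c₁ ^ 2 * exp (2 * (1 + c₀ ^ 2) * t) *
          ∫ s in (0 : ℝ)..t, W2 (f s) (g s) ^ 2 := by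
  intro z t ht
  obtain ⟨hX0, hV0, hY0, hW0⟩ := hinit z
  have hc₂1 : (1:ℝ) ≤ 1 + c₀ ^ 2 := by nlinarith [sq_nonneg c₀]
  set c₂ : ℝ := 1 + c₀ ^ 2 with hc₂def
  set x : ℝ → EuclideanSpace ℝ (Fin d) := fun τ => X z τ - Y z τ with hxdef
  set v : ℝ → EuclideanSpace ℝ (Fin d) := fun τ => V z τ - W z τ with hvdef
  set Δ : ℝ → EuclideanSpace ℝ (Fin d) :=
    fun τ => F τ (X z τ) (V z τ) - G τ (Y z τ) (W z τ) with hΔdef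
  set φ : ℝ → ℝ := fun τ => ‖x τ‖ ^ 2 + ‖v τ‖ ^ 2 with hφdef
  set w : ℝ → ℝ := fun s => W2 (f s) (g s) with hwdef
  set P : ℝ → ℝ := fun r => ∫ s in (0:ℝ)..r, Real.exp (-(c₂*s)) * w s with hPdef
  have hw0 : ∀ s, 0 ≤ w s := fun s => W2_nonneg _ _
  have hφ0 : ∀ τ, 0 ≤ φ τ := fun τ => by simp only [hφdef]; positivity
  have hwc : ContinuousOn w (Set.Icc 0 T) := hW2cont
  -- continuity of the coordinates
  have hXc : ContinuousOn (X z) (Set.Icc 0 T) :=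
    fun τ hτ => ((hX z τ hτ).continuousAt).continuousWithinAt
  have hYc : ContinuousOn (Y z) (Set.Icc 0 T) :=
    fun τ hτ => ((hY z τ hτ).continuousAt).continuousWithinAt
  have hVc : ContinuousOn (V z) (Set.Icc 0 T) :=
    fun τ hτ => ((hV z τ hτ).continuousAt).continuousWithinAt
  have hWc : ContinuousOn (W z) (Set.Icc 0 T) :=
    fun τ hτ => ((hW z τ hτ).continuousAt).continuousWithinAt
  have hxc : ContinuousOn x (Set.Icc 0 T) := hXc.sub hYc
  have hvc : ContinuousOn v (Set.Icc 0 T) := hVc.sub hWc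
  have hφc : ContinuousOn φ (Set.Icc 0 T) := (hxc.norm.pow 2).add (hvc.norm.pow 2)
  -- derivatives
  have hx' : ∀ τ ∈ Set.Icc 0 T, HasDerivAt x (v τ) τ :=
    fun τ hτ => (hX z τ hτ).sub (hY z τ hτ)
  have hv' : ∀ τ ∈ Set.Icc 0 T, HasDerivAt v (Δ τ) τ :=
    fun τ hτ => (hV z τ hτ).sub (hW z τ hτ)
  have hφ' : ∀ τ ∈ Set.Icc 0 T, HasDerivAt φ
      (2*(inner ℝ (x τ) (v τ) : ℝ) + 2*(inner ℝ (v τ) (Δ τ) : ℝ)) τ := by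
    intro τ hτ
    have h1 := (hx' τ hτ).inner ℝ (hx' τ hτ)
    have h2 := (hv' τ hτ).inner ℝ (hv' τ hτ)
    have h3 := h1.add h2
    simp only [real_inner_self_eq_norm_sq] at h3
    have e1 : (2*(inner ℝ (x τ) (v τ) : ℝ) + 2*(inner ℝ (v τ) (Δ τ) : ℝ))
        = ((inner ℝ (x τ) (v τ) : ℝ) + (inner ℝ (v τ) (x τ) : ℝ))
          + ((inner ℝ (v τ) (Δ τ) : ℝ) + (inner ℝ (Δ τ) (v τ) : ℝ)) := by
      rw [real_inner_comm (v τ) (x τ), real_inner_comm (Δ τ) (v τ)]; ring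
    rw [e1]
    exact h3
  -- force bound
  have hΔle : ∀ τ ∈ Set.Icc 0 T, ‖Δ τ‖ ≤ c₁ * w τ + c₀ * Real.sqrt (φ τ) := by
    intro τ hτ
    have h1 := hFG τ hτ (X z τ) (V z τ)
    have h2 := hG τ hτ (X z τ) (V z τ) (Y z τ) (W z τ)
    have hsplit : Δ τ = (F τ (X z τ) (V z τ) - G τ (X z τ) (V z τ))
        + (G τ (X z τ) (V z τ) - G τ (Y z τ) (W z τ)) := by
      simp only [hΔdef]; abel
    rw [hsplit]
    calc ‖_ + _‖ ≤ _ := norm_add_le _ _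
      _ ≤ c₁ * w τ + c₀ * Real.sqrt (φ τ) := add_le_add h1 h2
  -- primitive of the W2 forcing
  have hwec : ContinuousOn (fun s => Real.exp (-(c₂*s)) * w s) (Set.Icc 0 T) :=
    ((Real.continuous_exp.comp (continuous_const.mul continuous_id).neg).continuousOn).mul hwc
  have hPcont : ContinuousOn P (Set.Icc 0 T) := by
    have hint : IntegrableOn (fun s => Real.exp (-(c₂*s)) * w s) (Set.uIcc 0 T) := by
      rw [Set.uIcc_of_le hT]; exact hwec.integrableOn_Icc
    have := intervalIntegral.continuousOn_primitive_interval hint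
    rwa [Set.uIcc_of_le hT] at this
  have hP' : ∀ τ ∈ Set.Ioo 0 T, HasDerivAt P (Real.exp (-(c₂*τ)) * w τ) τ := by
    intro τ hτ
    apply intervalIntegral.integral_hasDerivAt_right
    · apply ContinuousOn.intervalIntegrable
      rw [Set.uIcc_of_le hτ.1.le]
      exact hwec.mono (Set.Icc_subset_Icc_right hτ.2.le)
    · exact ⟨Set.Ioo 0 T, Ioo_mem_nhds hτ.1 hτ.2,
        (hwec.mono Set.Ioo_subset_Icc_self).aestronglyMeasurable measurableSet_Ioo⟩
    · exact hwec.continuousAt (Icc_mem_nhds hτ.1 hτ.2)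
  clear_value P w φ Δ v x c₂
  clear hX hV hY hW hFG hG hW2cont hinit hXc hYc hVc hWc hxc hvc hx' hv'
  -- ε-regularized Gronwall estimate
  have hkey : ∀ ε > 0, Real.sqrt (φ t) ≤
      c₁ * Real.exp (c₂*t) * P t + Real.exp (c₂*t) * Real.sqrt ε := by
    intro ε hε
    have hsq : ∀ τ ∈ Set.Icc 0 T, HasDerivAt (fun r => Real.sqrt (ε + φ r))
        ((2*(inner ℝ (x τ) (v τ):ℝ) + 2*(inner ℝ (v τ) (Δ τ):ℝ)) / (2 * Real.sqrt (ε + φ τ))) τ :=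
      fun τ hτ => ((hφ' τ hτ).const_add ε).sqrt (ne_of_gt (by have := hφ0 τ; linarith))
    have key : ∀ τ ∈ Set.Ioo 0 T, ∃ D, HasDerivAt
        (fun r => Real.exp (-(c₂*r)) * Real.sqrt (ε + φ r) - c₁ * P r) D τ ∧ D ≤ 0 := by
      intro τ hτ
      have hτ' : τ ∈ Set.Icc 0 T := Set.Ioo_subset_Icc_self hτ
      refine ⟨_, (((((hasDerivAt_id τ).const_mul c₂).neg.exp).mul (hsq τ hτ')).sub
        ((hP' τ hτ).const_mul c₁)), ?_⟩
      have hφτ : 0 ≤ φ τ := hφ0 τ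
      have hspos : 0 < Real.sqrt (ε + φ τ) := Real.sqrt_pos.2 (by linarith)
      have hepos : 0 < Real.exp (-(c₂*τ)) := Real.exp_pos _
      have hia : (inner ℝ (x τ) (v τ) : ℝ) ≤ ‖x τ‖ * ‖v τ‖ := real_inner_le_norm _ _
      have hib : (inner ℝ (v τ) (Δ τ) : ℝ) ≤ ‖v τ‖ * (c₁ * w τ + c₀ * Real.sqrt (φ τ)) :=
        le_trans (real_inner_le_norm _ _)
          (mul_le_mul_of_nonneg_left (hΔle τ hτ') (norm_nonneg _))
      have hφτeq : φ τ = ‖x τ‖^2 + ‖v τ‖^2 := by simp only [hφdef]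
      have hr2 : Real.sqrt (φ τ)^2 = φ τ := Real.sq_sqrt hφτ
      have hs2 : Real.sqrt (ε + φ τ)^2 = ε + φ τ := Real.sq_sqrt (by linarith)
      have has : ‖v τ‖ ≤ Real.sqrt (ε + φ τ) := by
        have h1 : ‖v τ‖^2 ≤ ε + φ τ := by nlinarith [sq_nonneg (‖x τ‖)]
        calc ‖v τ‖ = Real.sqrt (‖v τ‖^2) := (Real.sqrt_sq (norm_nonneg _)).symm
          _ ≤ _ := Real.sqrt_le_sqrt h1
      have hrs : Real.sqrt (φ τ) ≤ Real.sqrt (ε + φ τ) := Real.sqrt_le_sqrt (by linarith)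
      have hr0 := Real.sqrt_nonneg (φ τ)
      have hr2s : Real.sqrt (φ τ)^2 ≤ Real.sqrt (ε+φ τ)^2 := by nlinarith
      have hmain : 2*(inner ℝ (x τ) (v τ):ℝ) + 2*(inner ℝ (v τ) (Δ τ):ℝ)
          ≤ 2*c₂*Real.sqrt (ε+φ τ)^2 + 2*c₁*(w τ)*Real.sqrt (ε+φ τ) := by
        rw [hc₂def]
        nlinarith [hia, hib, hr2, hφτeq, hs2, has, hrs, hr2s, hw0 τ,
          norm_nonneg (x τ), norm_nonneg (v τ), hr0, hc₀, hc₁, hε.le,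
          sq_nonneg (‖v τ‖ - ‖x τ‖), sq_nonneg (‖v τ‖ - c₀*Real.sqrt (φ τ)),
          mul_nonneg (sub_nonneg.2 has) (mul_nonneg hc₁ (hw0 τ)),
          mul_nonneg (sq_nonneg c₀) (sub_nonneg.2 hr2s)]
      have hdiv : (2*(inner ℝ (x τ) (v τ):ℝ) + 2*(inner ℝ (v τ) (Δ τ):ℝ)) / (2*Real.sqrt (ε+φ τ))
          ≤ c₂*Real.sqrt (ε+φ τ) + c₁*w τ := by
        rw [div_le_iff₀ (by linarith [hspos] : (0:ℝ) < 2*Real.sqrt (ε+φ τ))]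
        nlinarith [hmain]
      have hmul := mul_le_mul_of_nonneg_left hdiv hepos.le
      simp only [id_eq, Pi.neg_apply]
      nlinarith [hmul, hspos.le, hepos.le]
    have hucont : ContinuousOn
        (fun r => Real.exp (-(c₂*r)) * Real.sqrt (ε + φ r) - c₁ * P r) (Set.Icc 0 T) :=
      (((Real.continuous_exp.comp (continuous_const.mul continuous_id).neg).continuousOn).mul
        (Real.continuous_sqrt.comp_continuousOn (continuousOn_const.add hφc))).sub
        (continuousOn_const.mul hPcont)
    have hanti : AntitoneOn
        (fun r => Real.exp (-(c₂*r)) * Real.sqrt (ε + φ r) - c₁ * P r) (Set.Icc 0 T) := by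
      apply antitoneOn_of_deriv_nonpos (convex_Icc 0 T) hucont
      · intro τ hτ; rw [interior_Icc] at hτ
        obtain ⟨D, hD, _⟩ := key τ hτ
        exact hD.differentiableAt.differentiableWithinAt
      · intro τ hτ; rw [interior_Icc] at hτ
        obtain ⟨D, hD, hD0⟩ := key τ hτ
        rw [hD.deriv]; exact hD0
    have hut := hanti (Set.left_mem_Icc.2 hT) ht ht.1
    have hφ00 : φ 0 = 0 := by
      simp only [hφdef, hxdef, hvdef, hX0, hY0, hV0, hW0, sub_self, norm_zero]
      simp
    have hu0 : Real.exp (-(c₂*0)) * Real.sqrt (ε + φ 0) - c₁ * P 0 = Real.sqrt ε := by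
      rw [hφ00]
      simp only [hPdef]
      simp
    have hut' : Real.exp (-(c₂*t)) * Real.sqrt (ε + φ t) - c₁ * P t ≤ Real.sqrt ε := by
      rw [← hu0]; exact hut
    have hee : Real.exp (c₂*t) * Real.exp (-(c₂*t)) = 1 := by
      rw [← Real.exp_add]; simp
    have hsφ : Real.sqrt (φ t) ≤ Real.sqrt (ε + φ t) :=
      Real.sqrt_le_sqrt (by linarith [hφ0 t, hε.le])
    have hstep2 : Real.exp (-(c₂*t)) * Real.sqrt (ε + φ t) ≤ Real.sqrt ε + c₁ * P t := by
      linarith [hut']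
    have hstep3 := mul_le_mul_of_nonneg_left hstep2 (Real.exp_pos (c₂*t)).le
    rw [← mul_assoc, hee, one_mul] at hstep3
    nlinarith [hstep3, hsφ]
  -- pass to the limit ε → 0
  have hkey2 : Real.sqrt (φ t) ≤ c₁ * Real.exp (c₂*t) * P t := by
    by_contra hcon
    push_neg at hcon
    have hδpos : 0 < Real.sqrt (φ t) - c₁ * Real.exp (c₂*t) * P t := sub_pos.2 hcon
    set δ := Real.sqrt (φ t) - c₁ * Real.exp (c₂*t) * P t with hδ
    clear_value δ
    have hεp : 0 < (δ / (2 * Real.exp (c₂*t)))^2 :=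
      pow_pos (div_pos hδpos (by positivity)) 2
    have hk := hkey _ hεp
    rw [Real.sqrt_sq (div_nonneg hδpos.le (by positivity))] at hk
    have hne : Real.exp (c₂*t) ≠ 0 := (Real.exp_pos _).ne'
    have heq : Real.exp (c₂*t) * (δ / (2 * Real.exp (c₂*t))) = δ / 2 := by
      field_simp
    rw [heq] at hk
    linarith
  -- Cauchy-Schwarz type bound for P t
  have hIint : IntervalIntegrable (fun s => w s^2) volume 0 t := by
    apply ContinuousOn.intervalIntegrable
    rw [Set.uIcc_of_le ht.1]
    exact (hwc.mono (Set.Icc_subset_Icc_right ht.2)).pow 2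
  have hI0 : 0 ≤ ∫ s in (0:ℝ)..t, w s^2 :=
    intervalIntegral.integral_nonneg ht.1 (fun s _ => sq_nonneg _)
  set I := ∫ s in (0:ℝ)..t, w s^2 with hIdef
  clear_value I
  have hE2int : IntervalIntegrable (fun s => Real.exp (-(c₂*s))^2) volume 0 t :=
    ((Real.continuous_exp.comp (continuous_const.mul continuous_id).neg).pow 2).intervalIntegrable 0 t
  have hder : ∀ s : ℝ, HasDerivAt (fun u : ℝ => -Real.exp (-u)) (Real.exp (-s)) s := by
    intro s
    have := (((hasDerivAt_id s).neg).exp).neg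
    simpa [Pi.neg_def] using this
  have hexpint : ∫ s in (0:ℝ)..t, Real.exp (-s) = 1 - Real.exp (-t) := by
    rw [intervalIntegral.integral_eq_sub_of_hasDerivAt (fun s _ => hder s)
      ((Real.continuous_exp.comp continuous_neg).intervalIntegrable 0 t)]
    show -Real.exp (-t) - -Real.exp (-0) = 1 - Real.exp (-t)
    rw [neg_zero, Real.exp_zero]; ring
  have hE2le : ∫ s in (0:ℝ)..t, Real.exp (-(c₂*s))^2 ≤ 1 := by
    have h1 : ∫ s in (0:ℝ)..t, Real.exp (-(c₂*s))^2 ≤ ∫ s in (0:ℝ)..t, Real.exp (-s) := by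
      apply intervalIntegral.integral_mono_on ht.1 hE2int
        ((Real.continuous_exp.comp continuous_neg).intervalIntegrable 0 t)
      intro s hs
      have h2 : Real.exp (-(c₂*s))^2 = Real.exp (-(c₂*s) + -(c₂*s)) := by
        rw [Real.exp_add]; ring
      rw [h2]
      apply Real.exp_le_exp.2
      show -(c₂*s) + -(c₂*s) ≤ -s
      nlinarith [hs.1, hc₂1]
    rw [hexpint] at h1
    linarith [(Real.exp_pos (-t)).le]
  have hE20 : 0 ≤ ∫ s in (0:ℝ)..t, Real.exp (-(c₂*s))^2 :=
    intervalIntegral.integral_nonneg ht.1 (fun s _ => sq_nonneg _)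
  have hwint : IntervalIntegrable (fun s => Real.exp (-(c₂*s)) * w s) volume 0 t := by
    apply ContinuousOn.intervalIntegrable
    rw [Set.uIcc_of_le ht.1]
    exact hwec.mono (Set.Icc_subset_Icc_right ht.2)
  have hPt : P t = ∫ s in (0:ℝ)..t, Real.exp (-(c₂*s)) * w s := by rw [hPdef]
  have hPI : ∀ L : ℝ, 0 < L →
      2*L*(P t) ≤ L^2 * (∫ s in (0:ℝ)..t, Real.exp (-(c₂*s))^2) + I := by
    intro L hL
    rw [hPt, hIdef]
    exact aux_CS c₂ t L w ht.1 hE2int hIint hwint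
  have hPle : P t ≤ Real.sqrt I := by
    have hstep : ∀ δ > 0, P t ≤ Real.sqrt I + δ := by
      intro δ hδ
      have hL : 0 < Real.sqrt I + δ := by
        have := Real.sqrt_nonneg I; linarith
      have h := hPI _ hL
      have hI2 : I ≤ (Real.sqrt I + δ)^2 := by
        nlinarith [Real.sq_sqrt hI0, Real.sqrt_nonneg I]
      have hE2b : (Real.sqrt I + δ)^2 * (∫ s in (0:ℝ)..t, Real.exp (-(c₂*s))^2)
          ≤ (Real.sqrt I + δ)^2 := by
        nlinarith [hE2le, hE20, sq_nonneg (Real.sqrt I + δ)]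
      nlinarith [h, hI2, hE2b, hL, mul_pos hL hL]
    by_contra hcon
    push_neg at hcon
    have := hstep ((P t - Real.sqrt I)/2) (by linarith)
    linarith
  -- assemble
  have hφt0 : 0 ≤ φ t := hφ0 t
  have hfin : Real.sqrt (φ t) ≤ c₁ * Real.exp (c₂*t) * Real.sqrt I := by
    refine le_trans hkey2 ?_
    have := mul_le_mul_of_nonneg_left hPle (mul_nonneg hc₁ (Real.exp_pos (c₂*t)).le)
    nlinarith [this]

  have hexp2 : Real.exp (2*c₂*t) = Real.exp (c₂*t) * Real.exp (c₂*t) := by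
    rw [← Real.exp_add]; ring_nf
  have hLHS : ‖X z t - Y z t‖^2 + ‖V z t - W z t‖^2 = φ t := by
    simp only [hφdef, hxdef, hvdef]
  have hRHS : (∫ s in (0:ℝ)..t, W2 (f s) (g s)^2) = I := by
    rw [hIdef]; simp only [hwdef]
  rw [hLHS, hRHS]
  calc φ t = Real.sqrt (φ t) * Real.sqrt (φ t) := (Real.mul_self_sqrt hφt0).symm
    _ ≤ (c₁ * Real.exp (c₂*t) * Real.sqrt I) * (c₁ * Real.exp (c₂*t) * Real.sqrt I) :=
        mul_self_le_mul_self (Real.sqrt_nonneg _) hfin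
    _ = c₁^2 * (Real.exp (c₂*t) * Real.exp (c₂*t)) * (Real.sqrt I * Real.sqrt I) := by ring
    _ = c₁^2 * Real.exp (2*c₂*t) * I := by rw [Real.mul_self_sqrt hI0, ← hexp2]
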